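/- For the quadratic map P(x) = a x − b x² with 1 < a ≤ 2 and b > 0, every initial condition x₀ ∈ (0, a/b) eventually enters and the iterates converge to the fixed point x* = (a−1)/b; in particular P maps the interval (0, a/b) into (0, a²/(4b)] ⊆ (0, a/b). -/

import Mathlib

open Filter

private lemma quad_aux_conv (a b : ℝ) (ha1 : 1 < a) (ha2 : a ≤ 2) (hb : 0 < b)
    (x : ℝ) (hx0 : 0 < x) (hxs : x ≤ a / (2 * b)) :
    Tendsto (fun n : ℕ => (fun y => a * y - b * y ^ 2)^[n] x) atTop
      (nhds ((a - 1) / b)) := by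
  set P : ℝ → ℝ := fun y => a * y - b * y ^ 2 with hP
  set c : ℝ := (a - 1) / b with hc
  have hc0 : 0 < c := div_pos (by linarith) hb
  have hbc : b * c = a - 1 := by rw [hc]; field_simp
  have hbs : b * (a / (2 * b)) = a / 2 := by field_simp
  have hcs : c ≤ a / (2 * b) := by
    rw [div_le_div_iff₀ hb (by positivity)]; nlinarith
  have hPcont : Continuous P := by fun_prop
  -- any positive fixed point equals c
  have key : ∀ L : ℝ, 0 < L → P L = L → L = c := by
    intro L hL hfix
    simp only [hP] at hfix
    have h2 : L * (b * L - (a - 1)) = 0 := by linear_combination -hfix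
    rcases mul_eq_zero.mp h2 with h | h
    · exact absurd h hL.ne'
    · rw [hc, eq_div_iff hb.ne']
      linarith [h]
  -- limit of iterates is a fixed point
  have fix_of_tendsto : ∀ L : ℝ,
      Tendsto (fun n : ℕ => P^[n] x) atTop (nhds L) → P L = L := by
    intro L hL
    have h1 : Tendsto (fun n : ℕ => P (P^[n] x)) atTop (nhds (P L)) :=
      (hPcont.tendsto L).comp hL
    have h2 : Tendsto (fun n : ℕ => P^[n + 1] x) atTop (nhds L) :=
      hL.comp (tendsto_add_atTop_nat 1)
    simp only [Function.iterate_succ_apply'] at h2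
    exact (tendsto_nhds_unique h1 h2).symm ▸ rfl
  by_cases hxc : x ≤ c
  · -- increasing case
    have inv : ∀ n : ℕ, 0 < P^[n] x ∧ P^[n] x ≤ c := by
      intro n
      induction n with
      | zero => simpa using ⟨hx0, hxc⟩
      | succ n ih =>
        obtain ⟨h1, h2⟩ := ih
        rw [Function.iterate_succ_apply']
        set y := P^[n] x
        have hby : b * y ≤ a - 1 := by
          calc b * y ≤ b * c := by nlinarith
            _ = a - 1 := hbc
        constructor
        · show 0 < a * y - b * y ^ 2
          nlinarith [mul_pos h1 (show 0 < a - b * y by nlinarith)]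
        · show a * y - b * y ^ 2 ≤ c
          have h3 : 0 ≤ (1 - b * y) * (a - 1 - b * y) :=
            mul_nonneg (by nlinarith) (by linarith)
          rw [hc, ← sub_nonneg]
          have : (a - 1) / b - (a * y - b * y ^ 2)
              = ((1 - b * y) * (a - 1 - b * y)) / b := by
            field_simp; ring
          rw [this]
          positivity
    have hmono : Monotone fun n : ℕ => P^[n] x := by
      apply monotone_nat_of_le_succ
      intro n
      obtain ⟨h1, h2⟩ := inv n
      rw [Function.iterate_succ_apply']
      have hby : b * P^[n] x ≤ a - 1 := by
        calc b * P^[n] x ≤ b * c := by nlinarith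
          _ = a - 1 := hbc
      show P^[n] x ≤ a * P^[n] x - b * (P^[n] x) ^ 2
      nlinarith [mul_nonneg h1.le (show 0 ≤ a - 1 - b * P^[n] x by linarith)]
    have hbdd : BddAbove (Set.range fun n : ℕ => P^[n] x) := by
      refine ⟨c, ?_⟩
      rintro _ ⟨n, rfl⟩
      exact (inv n).2
    have htend : Tendsto (fun n : ℕ => P^[n] x) atTop
        (nhds (⨆ n : ℕ, P^[n] x)) := tendsto_atTop_ciSup hmono hbdd
    have hL0 : 0 < ⨆ n : ℕ, P^[n] x :=
      lt_of_lt_of_le hx0 (by simpa using le_ciSup hbdd 0)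
    have : (⨆ n : ℕ, P^[n] x) = c := key _ hL0 (fix_of_tendsto _ htend)
    rwa [this] at htend
  · -- decreasing case
    push_neg at hxc
    have inv : ∀ n : ℕ, c ≤ P^[n] x ∧ P^[n] x ≤ a / (2 * b) := by
      intro n
      induction n with
      | zero => simpa using ⟨hxc.le, hxs⟩
      | succ n ih =>
        obtain ⟨h1, h2⟩ := ih
        rw [Function.iterate_succ_apply']
        set y := P^[n] x
        have hby1 : a - 1 ≤ b * y := by
          calc a - 1 = b * c := hbc.symm
            _ ≤ b * y := by nlinarith
        have hby2 : b * y ≤ a / 2 := by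
          calc b * y ≤ b * (a / (2 * b)) := by nlinarith
            _ = a / 2 := hbs
        constructor
        · show c ≤ a * y - b * y ^ 2
          have h3 : 0 ≤ (b * y - (a - 1)) * (1 - b * y) := by
            apply mul_nonneg (by linarith)
            nlinarith
          rw [hc, ← sub_nonneg]
          have : (a * y - b * y ^ 2) - (a - 1) / b
              = ((b * y - (a - 1)) * (1 - b * y)) / b := by
            field_simp; ring
          rw [this]
          positivity
        · show a * y - b * y ^ 2 ≤ a / (2 * b)
          rw [le_div_iff₀ (by positivity)]
          nlinarith [sq_nonneg (2 * b * y - a)]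
    have hanti : Antitone fun n : ℕ => P^[n] x := by
      apply antitone_nat_of_succ_le
      intro n
      obtain ⟨h1, h2⟩ := inv n
      rw [Function.iterate_succ_apply']
      have hby1 : a - 1 ≤ b * P^[n] x := by
        calc a - 1 = b * c := hbc.symm
          _ ≤ b * P^[n] x := by nlinarith
      have hy0 : 0 < P^[n] x := lt_of_lt_of_le hc0 h1
      show a * P^[n] x - b * (P^[n] x) ^ 2 ≤ P^[n] x
      nlinarith [mul_nonneg hy0.le (show 0 ≤ b * P^[n] x - (a - 1) by linarith)]
    have hbdd : BddBelow (Set.range fun n : ℕ => P^[n] x) := by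
      refine ⟨c, ?_⟩
      rintro _ ⟨n, rfl⟩
      exact (inv n).1
    have htend : Tendsto (fun n : ℕ => P^[n] x) atTop
        (nhds (⨅ n : ℕ, P^[n] x)) := tendsto_atTop_ciInf hanti hbdd
    have hL0 : 0 < ⨅ n : ℕ, P^[n] x :=
      lt_of_lt_of_le hc0 (le_ciInf fun n => (inv n).1)
    have : (⨅ n : ℕ, P^[n] x) = c := key _ hL0 (fix_of_tendsto _ htend)
    rwa [this] at htend

/-- For `P(x) = a x − b x²` with `1 < a ≤ 2` and `b > 0`, every initial
condition in `(0, a/b)` has iterates converging to the fixed point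
`x* = (a−1)/b`; in particular `P` maps `(0, a/b)` into `(0, a²/(4b)]`, which is
contained in `(0, a/b)`. -/
theorem quadratic_map_basin_of_attraction (a b : ℝ) (ha1 : 1 < a) (ha2 : a ≤ 2)
    (hb : 0 < b) :
    let P : ℝ → ℝ := fun x => a * x - b * x ^ 2
    (∀ x₀ ∈ Set.Ioo (0 : ℝ) (a / b),
      Tendsto (fun n : ℕ => P^[n] x₀) atTop (nhds ((a - 1) / b))) ∧
    Set.MapsTo P (Set.Ioo (0 : ℝ) (a / b)) (Set.Ioc (0 : ℝ) (a ^ 2 / (4 * b))) ∧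
    Set.Ioc (0 : ℝ) (a ^ 2 / (4 * b)) ⊆ Set.Ioo (0 : ℝ) (a / b) := by
  intro P
  have hmaps : Set.MapsTo P (Set.Ioo (0 : ℝ) (a / b))
      (Set.Ioc (0 : ℝ) (a ^ 2 / (4 * b))) := by
    intro x hx
    obtain ⟨hx0, hxab⟩ := hx
    have hbx : b * x < a := by
      rw [← lt_div_iff₀' hb]; exact hxab
    constructor
    · show 0 < a * x - b * x ^ 2
      nlinarith [mul_pos hx0 (show 0 < a - b * x by linarith)]
    · show a * x - b * x ^ 2 ≤ a ^ 2 / (4 * b)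
      rw [le_div_iff₀ (by positivity)]
      nlinarith [sq_nonneg (2 * b * x - a)]
  refine ⟨?_, hmaps, ?_⟩
  · intro x₀ hx₀
    have h1 : P x₀ ∈ Set.Ioc (0 : ℝ) (a ^ 2 / (4 * b)) := hmaps hx₀
    have h2 : a ^ 2 / (4 * b) ≤ a / (2 * b) := by
      rw [div_le_div_iff₀ (by positivity) (by positivity)]
      nlinarith [mul_nonneg (show (0:ℝ) ≤ 2 - a by linarith)
        (mul_pos (show (0:ℝ) < a by linarith) hb).le]
    have h3 := quad_aux_conv a b ha1 ha2 hb (P x₀) h1.1 (h1.2.trans h2)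
    have h4 : Tendsto (fun n : ℕ => P^[n + 1] x₀) atTop (nhds ((a - 1) / b)) := by
      simpa [Function.iterate_succ_apply] using h3
    exact (tendsto_add_atTop_iff_nat 1).mp h4
  · intro y hy
    refine ⟨hy.1, lt_of_le_of_lt hy.2 ?_⟩
    rw [div_lt_div_iff₀ (by positivity) hb]
    nlinarith [mul_pos (show (0:ℝ) < 4 - a by linarith)
      (mul_pos (show (0:ℝ) < a by linarith) hb)]
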